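/- Let k be a natural number, u = 2^k, let ℓ be an integer with 1 ≤ ℓ ≤ u, and let S = [a, a+ℓ) × [b, b+ℓ) be an axis-aligned square with integer corner (a,b), contained in [0,u)². Let C be a finite nonempty set of integer points contained in S. Then the quadtree node count of C is at most |C| · ⌈log₂ ℓ⌉ + 4·(k+1). -/

import Mathlib

/-- The quadtree node count of a finite point set `P` on a `2^k × 2^k` grid:
the number of triples `(d, i, j)` with `d ≤ k` such that `(i, j)` is the
depth-`d` dyadic square containing some point of `P`. -/
def quadNodes (k : ℕ) (P : Finset (ℕ × ℕ)) : ℕ :=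
  ((Finset.range (k + 1)).biUnion fun d =>
    P.image fun p => (d, p.1 / 2 ^ (k - d), p.2 / 2 ^ (k - d))).card

/-!
A square of side `ℓ ≤ 2 ^ m` meets at most two dyadic intervals of length `s ≥ ℓ` in each
coordinate, hence at most four dyadic squares of side `s`. So each of the `k + 1 - m` depths
`d` with `2 ^ (k - d) ≥ 2 ^ m` contributes at most `4` nodes, while each of the remaining `m`
depths contributes at most one node per point, where `m = ⌈log₂ ℓ⌉`.
-/

open Finset

def quadLevel (k d : ℕ) (P : Finset (ℕ × ℕ)) : Finset (ℕ × ℕ × ℕ) :=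
  P.image fun p => (d, p.1 / 2 ^ (k - d), p.2 / 2 ^ (k - d))

theorem quadNodes_eq_card_biUnion_quadLevel (k : ℕ) (P : Finset (ℕ × ℕ)) :
    quadNodes k P = ((range (k + 1)).biUnion fun d => quadLevel k d P).card :=
  rfl

theorem Nat.div_eq_or_eq_add_one_of_lt_add {s a x : ℕ} (hs : 0 < s) (hax : a ≤ x)
    (hxa : x < a + s) : x / s = a / s ∨ x / s = a / s + 1 := by
  have hlo : a / s ≤ x / s := Nat.div_le_div_right hax
  have hhi : x / s ≤ (a + s) / s := Nat.div_le_div_right hxa.le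
  rw [Nat.add_div_right _ hs] at hhi
  omega

theorem card_image_div_le_four {P : Finset (ℕ × ℕ)} {s ℓ a b : ℕ} (hs : 0 < s) (hℓs : ℓ ≤ s)
    (hP : ∀ p ∈ P, a ≤ p.1 ∧ p.1 < a + ℓ ∧ b ≤ p.2 ∧ p.2 < b + ℓ) :
    (P.image fun p => (p.1 / s, p.2 / s)).card ≤ 4 := by
  have hsub : (P.image fun p => (p.1 / s, p.2 / s)) ⊆
      ({a / s, a / s + 1} : Finset ℕ) ×ˢ ({b / s, b / s + 1} : Finset ℕ) := by
    simp only [subset_iff, mem_image, mem_product, mem_insert, mem_singleton]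
    rintro _ ⟨p, hp, rfl⟩
    obtain ⟨hx₁, hx₂, hy₁, hy₂⟩ := hP p hp
    exact ⟨Nat.div_eq_or_eq_add_one_of_lt_add hs hx₁ (by omega),
      Nat.div_eq_or_eq_add_one_of_lt_add hs hy₁ (by omega)⟩
  calc _ ≤ _ := card_le_card hsub
    _ ≤ 2 * 2 := by rw [card_product]; exact Nat.mul_le_mul card_le_two card_le_two

theorem card_quadLevel_le_four {k d ℓ a b : ℕ} {P : Finset (ℕ × ℕ)} (hℓ : ℓ ≤ 2 ^ (k - d))
    (hP : ∀ p ∈ P, a ≤ p.1 ∧ p.1 < a + ℓ ∧ b ≤ p.2 ∧ p.2 < b + ℓ) :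
    (quadLevel k d P).card ≤ 4 := by
  have hfactor : quadLevel k d P =
      (P.image fun p => (p.1 / 2 ^ (k - d), p.2 / 2 ^ (k - d))).image (Prod.mk d) := by
    rw [quadLevel, image_image]; rfl
  rw [hfactor]
  exact card_image_le.trans (card_image_div_le_four (Nat.two_pow_pos _) hℓ hP)

theorem card_quadLevel_le_card (k d : ℕ) (P : Finset (ℕ × ℕ)) :
    (quadLevel k d P).card ≤ P.card :=
  card_image_le

theorem quadtree_cluster_bound_general (k : ℕ) (u : ℕ) (hu : u = 2 ^ k)
    (ℓ : ℕ) (hℓu : ℓ ≤ u)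
    (a b : ℕ)
    (C : Finset (ℕ × ℕ))
    (hsq : ∀ p ∈ C, a ≤ p.1 ∧ p.1 < a + ℓ ∧ b ≤ p.2 ∧ p.2 < b + ℓ) :
    quadNodes k C ≤ C.card * Nat.clog 2 ℓ + 4 * (k + 1) := by
  set m := Nat.clog 2 ℓ
  have hmk : m ≤ k := by
    simpa [hu, Nat.clog_pow 2 k one_lt_two] using Nat.clog_mono_right 2 hℓu
  have hshallow : ∀ d < k + 1 - m, (quadLevel k d C).card ≤ 4 := fun d hd =>
    card_quadLevel_le_four ((Nat.le_pow_clog one_lt_two ℓ).trans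
      (Nat.pow_le_pow_right two_pos (by omega))) hsq
  calc quadNodes k C ≤ ∑ d ∈ range (k + 1), (quadLevel k d C).card := by
        rw [quadNodes_eq_card_biUnion_quadLevel]; exact card_biUnion_le
    _ = ∑ d ∈ range (k + 1 - m), (quadLevel k d C).card
        + ∑ i ∈ range m, (quadLevel k (k + 1 - m + i) C).card := by
        rw [← sum_range_add, Nat.sub_add_cancel (by omega)]
    _ ≤ ∑ _d ∈ range (k + 1 - m), 4 + ∑ _i ∈ range m, C.card := by
        gcongr with d hd i
        · exact hshallow d (mem_range.mp hd)
        · exact card_quadLevel_le_card _ _ _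
    _ ≤ C.card * m + 4 * (k + 1) := by
        simp only [sum_const, card_range, smul_eq_mul]
        nlinarith [Nat.sub_le (k + 1) m]

theorem quadtree_cluster_bound (k : ℕ) (u : ℕ) (hu : u = 2 ^ k)
    (ℓ : ℕ) (hℓ1 : 1 ≤ ℓ) (hℓu : ℓ ≤ u)
    (a b : ℕ) (ha : a + ℓ ≤ u) (hb : b + ℓ ≤ u)
    (C : Finset (ℕ × ℕ)) (hC : C.Nonempty)
    (hsq : ∀ p ∈ C, a ≤ p.1 ∧ p.1 < a + ℓ ∧ b ≤ p.2 ∧ p.2 < b + ℓ) :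
    quadNodes k C ≤ C.card * Nat.clog 2 ℓ + 4 * (k + 1) :=
  quadtree_cluster_bound_general k u hu ℓ hℓu a b C hsq
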